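/- arXiv:2403.19720 — 2 statements merged into one kernel-verified Lean document; each statement's English description precedes it below -/
import Mathlib

section
/- In the random-effects single-task model described in the context, let A be any real symmetric positive definite p×p matrix and β̂ = β_λ(A) = (XᵀX + nλA⁻¹)⁻¹Xᵀy. Then the predictive risk satisfies E[(x_newᵀβ̂ − y_new)²] = σ² + (λ²/p)·tr(Ω A⁻¹(Σ̂ + λA⁻¹)⁻¹Σ(Σ̂ + λA⁻¹)⁻¹A⁻¹) − (λσ²/n)·tr((Σ̂ + λA⁻¹)⁻¹Σ(Σ̂ + λA⁻¹)⁻¹A⁻¹) + (σ²/n)·tr(Σ(Σ̂ + λA⁻¹)⁻¹). -/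
open Matrix MeasureTheory ProbabilityTheory

/-- The index family for the four random elements `(β̄, ε, x_new, ε_new)`. -/
noncomputable def quadFam (n p : ℕ) : Fin 4 → Type :=
  ![Fin p → ℝ, Fin n → ℝ, Fin p → ℝ, ℝ]

/-- The measurable-space structures on the four coordinates. -/
noncomputable def quadFamMeas (n p : ℕ) : ∀ i, MeasurableSpace (quadFam n p i) :=
  Fin.cons (inferInstance : MeasurableSpace (Fin p → ℝ))
    (Fin.cons (inferInstance : MeasurableSpace (Fin n → ℝ))
      (Fin.cons (inferInstance : MeasurableSpace (Fin p → ℝ))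
        (Fin.cons (inferInstance : MeasurableSpace ℝ) finZeroElim)))

/-- The four random elements `(β̄, ε, x_new, ε_new)` bundled as a dependent family. -/
def quadFun {W : Type*} {n p : ℕ} (B : W → Fin p → ℝ) (E : W → Fin n → ℝ)
    (xnew : W → Fin p → ℝ) (enew : W → ℝ) : ∀ i, W → quadFam n p i :=
  Fin.cons B (Fin.cons E (Fin.cons xnew (Fin.cons enew finZeroElim)))

section Aux

variable {W : Type*} [MeasurableSpace W] {μ : Measure W} [IsProbabilityMeasure μ]

/-- Product of two L² functions is integrable. -/
lemma memL2_mul_int {f g : W → ℝ} (hf : MemLp f 2 μ) (hg : MemLp g 2 μ) :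
    Integrable (fun ω => f ω * g ω) μ := by
  have h : MemLp (f • g) 1 μ :=
    hg.smul hf
  exact h.integrable le_rfl

omit [IsProbabilityMeasure μ] in
/-- Expectation of a bilinear form in two random vectors. -/
lemma integral_bilin {a b : ℕ} (c : Fin a → ℝ) (d : Fin b → ℝ)
    (F : W → Fin a → ℝ) (G : W → Fin b → ℝ)
    (hFG : ∀ k l, Integrable (fun ω => F ω k * G ω l) μ) :
    ∫ ω, (∑ k, c k * F ω k) * (∑ l, d l * G ω l) ∂μ
      = ∑ k, ∑ l, c k * d l * ∫ ω, F ω k * G ω l ∂μ := by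
  have hpt : ∀ ω, (∑ k, c k * F ω k) * (∑ l, d l * G ω l)
      = ∑ k, ∑ l, c k * d l * (F ω k * G ω l) := by
    intro ω
    rw [Finset.sum_mul_sum]
    exact Finset.sum_congr rfl fun k _ => Finset.sum_congr rfl fun l _ => by ring
  simp_rw [hpt]
  rw [integral_finset_sum _
    (fun k _ => integrable_finset_sum _ (fun l _ => ((hFG k l).const_mul _)))]
  refine Finset.sum_congr rfl fun k _ => ?_
  rw [integral_finset_sum _ (fun l _ => ((hFG k l).const_mul _))]
  exact Finset.sum_congr rfl fun l _ => integral_const_mul _ _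

end Aux

/-- Core expectation computation with abstract coefficient matrices. -/
theorem key_expect
    {W : Type*} [MeasurableSpace W] (μ : Measure W) [IsProbabilityMeasure μ]
    (n p : ℕ)
    (Sg Om : Matrix (Fin p) (Fin p) ℝ) (σ : ℝ)
    (C : Matrix (Fin p) (Fin p) ℝ) (D : Matrix (Fin p) (Fin n) ℝ)
    (B : W → Fin p → ℝ) (E : W → Fin n → ℝ) (xnew : W → Fin p → ℝ) (enew : W → ℝ)
    (hB : Measurable B) (hE : Measurable E) (hx : Measurable xnew) (he : Measurable enew)
    (hB2 : ∀ i, MemLp (fun ω => B ω i) 2 μ)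
    (hE2 : ∀ i, MemLp (fun ω => E ω i) 2 μ)
    (hx2 : ∀ i, MemLp (fun ω => xnew ω i) 2 μ)
    (he2 : MemLp enew 2 μ)
    (hIndep : iIndepFun (m := quadFamMeas n p) (quadFun B E xnew enew) μ)
    (hBmean : ∀ i, ∫ ω, B ω i ∂μ = 0)
    (hBcov : ∀ i j, ∫ ω, B ω i * B ω j ∂μ = Om i j / p)
    (hEcov : ∀ i j, ∫ ω, E ω i * E ω j ∂μ = σ ^ 2 * (1 : Matrix (Fin n) (Fin n) ℝ) i j)
    (hxcov : ∀ i j, ∫ ω, xnew ω i * xnew ω j ∂μ = Sg i j)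
    (hemean : ∫ ω, enew ω ∂μ = 0)
    (hevar : ∫ ω, (enew ω) ^ 2 ∂μ = σ ^ 2) :
    ∫ ω, ((xnew ω) ⬝ᵥ (C.mulVec (B ω) + D.mulVec (E ω)) - enew ω) ^ 2 ∂μ
      = Matrix.trace (Sg * (C * Om * Cᵀ)ᵀ) / p
        + σ ^ 2 * Matrix.trace (Sg * (D * Dᵀ)ᵀ) + σ ^ 2 := by
  classical
  have hmeas : ∀ i, @Measurable W (quadFam n p i) _ (quadFamMeas n p i)
      (quadFun B E xnew enew i) := by
    intro i; fin_cases i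
    · exact hB
    · exact hE
    · exact hx
    · exact he
  -- independence facts
  have indBEx : IndepFun (fun ω => (B ω, E ω)) xnew μ :=
    hIndep.indepFun_prodMk hmeas 0 1 2 (by decide) (by decide)
  have indBE : IndepFun B E μ := hIndep.indepFun (i := 0) (j := 1) (by decide)
  have indTe : IndepFun (fun ω => (B ω, E ω, xnew ω)) enew μ := by
    have h := hIndep.indepFun_finset {0, 1, 2} {3} (by decide) hmeas
    have h01 : (0 : Fin 4) ∈ ({0,1,2} : Finset (Fin 4)) := by decide
    have h11 : (1 : Fin 4) ∈ ({0,1,2} : Finset (Fin 4)) := by decide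
    have h21 : (2 : Fin 4) ∈ ({0,1,2} : Finset (Fin 4)) := by decide
    have h33 : (3 : Fin 4) ∈ ({3} : Finset (Fin 4)) := by decide
    letI : ∀ i, MeasurableSpace (quadFam n p i) := quadFamMeas n p
    exact h.comp
      (show Measurable fun (v : ∀ i : ({0,1,2} : Finset (Fin 4)), quadFam n p i) =>
          ((v ⟨0, h01⟩ : Fin p → ℝ), (v ⟨1, h11⟩ : Fin n → ℝ), (v ⟨2, h21⟩ : Fin p → ℝ)) from
        ((measurable_pi_apply _).prodMk
          ((measurable_pi_apply _).prodMk (measurable_pi_apply _))))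
      (show Measurable fun (v : ∀ i : ({3} : Finset (Fin 4)), quadFam n p i) =>
          (v ⟨3, h33⟩ : ℝ) from measurable_pi_apply _)
  set v : W → Fin p → ℝ := fun ω => C.mulVec (B ω) + D.mulVec (E ω) with hvdef
  -- L² facts for v
  have hCB2 : ∀ i, MemLp (fun ω => C.mulVec (B ω) i) 2 μ := by
    intro i
    simp only [Matrix.mulVec, dotProduct]
    exact memLp_finset_sum _ (fun j _ => (hB2 j).const_mul (C i j))
  have hDE2 : ∀ i, MemLp (fun ω => D.mulVec (E ω) i) 2 μ := by
    intro i
    simp only [Matrix.mulVec, dotProduct]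
    exact memLp_finset_sum _ (fun j _ => (hE2 j).const_mul (D i j))
  have hv2 : ∀ i, MemLp (fun ω => v ω i) 2 μ := by
    intro i
    exact (hCB2 i).add (hDE2 i)
  -- measurable coordinate maps on the product
  have hmv : ∀ (i : Fin p),
      Measurable (fun q : (Fin p → ℝ) × (Fin n → ℝ) => (C.mulVec q.1 + D.mulVec q.2) i) := by
    intro i
    simp only [Pi.add_apply, Matrix.mulVec, dotProduct]
    exact (Finset.measurable_sum _ fun j _ =>
        (measurable_const.mul ((measurable_pi_apply j).comp measurable_fst))).add
      (Finset.measurable_sum _ fun j _ =>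
        (measurable_const.mul ((measurable_pi_apply j).comp measurable_snd)))
  -- independence of products
  have indxv : ∀ (i j i' j' : Fin p),
      IndepFun (fun ω => xnew ω i * xnew ω j) (fun ω => v ω i' * v ω j') μ :=
    fun i j i' j' => indBEx.symm.comp
      ((measurable_pi_apply i).mul (measurable_pi_apply j))
      ((hmv i').mul (hmv j'))
  have indae : IndepFun (fun ω => xnew ω ⬝ᵥ v ω) enew μ := by
    have hφ : Measurable fun q : (Fin p → ℝ) × (Fin n → ℝ) × (Fin p → ℝ) =>
        q.2.2 ⬝ᵥ (C.mulVec q.1 + D.mulVec q.2.1) := by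
      simp only [dotProduct]
      refine Finset.measurable_sum _ fun i _ => Measurable.mul ?_ ?_
      · exact (measurable_pi_apply i).comp (measurable_snd.comp measurable_snd)
      · exact (hmv i).comp (measurable_fst.prodMk (measurable_fst.comp measurable_snd))
    have h := indTe.comp hφ measurable_id
    exact h
  -- covariance of v
  have hBEzero : ∀ (k : Fin p) (l : Fin n), ∫ ω, B ω k * E ω l ∂μ = 0 := by
    intro k l
    have h := (indBE.comp (measurable_pi_apply k) (measurable_pi_apply l)).integral_fun_mul_eq_mul_integral
      (hB2 k).aestronglyMeasurable (hE2 l).aestronglyMeasurable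
    simp only [Function.comp_def] at h
    rw [h, hBmean k, zero_mul]
  have hvcov : ∀ i j, ∫ ω, v ω i * v ω j ∂μ
      = (C * Om * Cᵀ) i j / p + σ ^ 2 * (D * Dᵀ) i j := by
    intro i j
    have hint1 : Integrable (fun ω => C.mulVec (B ω) i * C.mulVec (B ω) j) μ :=
      memL2_mul_int (hCB2 i) (hCB2 j)
    have hint2 : Integrable (fun ω => C.mulVec (B ω) i * D.mulVec (E ω) j) μ :=
      memL2_mul_int (hCB2 i) (hDE2 j)
    have hint3 : Integrable (fun ω => D.mulVec (E ω) i * C.mulVec (B ω) j) μ :=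
      memL2_mul_int (hDE2 i) (hCB2 j)
    have hint4 : Integrable (fun ω => D.mulVec (E ω) i * D.mulVec (E ω) j) μ :=
      memL2_mul_int (hDE2 i) (hDE2 j)
    have hpt : ∀ ω, v ω i * v ω j
        = (C.mulVec (B ω) i * C.mulVec (B ω) j + C.mulVec (B ω) i * D.mulVec (E ω) j)
          + (D.mulVec (E ω) i * C.mulVec (B ω) j + D.mulVec (E ω) i * D.mulVec (E ω) j) := by
      intro ω; simp only [hvdef, Pi.add_apply]; ring
    have hint12 : Integrable (fun ω =>
        C.mulVec (B ω) i * C.mulVec (B ω) j + C.mulVec (B ω) i * D.mulVec (E ω) j) μ :=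
      hint1.add hint2
    have hint34 : Integrable (fun ω =>
        D.mulVec (E ω) i * C.mulVec (B ω) j + D.mulVec (E ω) i * D.mulVec (E ω) j) μ :=
      hint3.add hint4
    rw [integral_congr_ae (Filter.Eventually.of_forall hpt),
      integral_add hint12 hint34,
      integral_add hint1 hint2, integral_add hint3 hint4]
    have e1 : ∫ ω, C.mulVec (B ω) i * C.mulVec (B ω) j ∂μ = (C * Om * Cᵀ) i j / p := by
      have := integral_bilin (μ := μ) (fun k => C i k) (fun l => C j l) B B
        (fun k l => memL2_mul_int (hB2 k) (hB2 l))
      simp only [Matrix.mulVec, dotProduct]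
      rw [this]
      simp only [hBcov, Matrix.mul_apply, Matrix.transpose_apply, Finset.sum_mul,
        Finset.sum_div]
      rw [Finset.sum_comm]
      exact Finset.sum_congr rfl fun k _ => Finset.sum_congr rfl fun l _ => by ring
    have e2 : ∫ ω, C.mulVec (B ω) i * D.mulVec (E ω) j ∂μ = 0 := by
      have := integral_bilin (μ := μ) (fun k => C i k) (fun l => D j l) B E
        (fun k l => memL2_mul_int (hB2 k) (hE2 l))
      simp only [Matrix.mulVec, dotProduct]
      rw [this]
      simp [hBEzero]
    have e3 : ∫ ω, D.mulVec (E ω) i * C.mulVec (B ω) j ∂μ = 0 := by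
      have := integral_bilin (μ := μ) (fun k => D i k) (fun l => C j l) E B
        (fun k l => by
          have := memL2_mul_int (hB2 l) (hE2 k)
          simpa [mul_comm] using this)
      simp only [Matrix.mulVec, dotProduct]
      rw [this]
      have : ∀ (k : Fin n) (l : Fin p), ∫ ω, E ω k * B ω l ∂μ = 0 := by
        intro k l
        rw [show (fun ω => E ω k * B ω l) = fun ω => B ω l * E ω k from
          funext fun ω => mul_comm _ _] at *
        exact hBEzero l k
      simp [this]
    have e4 : ∫ ω, D.mulVec (E ω) i * D.mulVec (E ω) j ∂μ = σ ^ 2 * (D * Dᵀ) i j := by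
      have := integral_bilin (μ := μ) (fun k => D i k) (fun l => D j l) E E
        (fun k l => memL2_mul_int (hE2 k) (hE2 l))
      simp only [Matrix.mulVec, dotProduct]
      rw [this]
      simp only [hEcov, Matrix.one_apply, mul_ite, mul_one, mul_zero,
        Finset.sum_ite_eq, Finset.mem_univ, if_true, Matrix.mul_apply,
        Matrix.transpose_apply, Finset.mul_sum]
      exact Finset.sum_congr rfl fun k _ => by ring
    rw [e1, e2, e3, e4]
    ring
  -- integrability pieces
  have hxx : ∀ i j, Integrable (fun ω => xnew ω i * xnew ω j) μ :=
    fun i j => memL2_mul_int (hx2 i) (hx2 j)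
  have hvv : ∀ i j, Integrable (fun ω => v ω i * v ω j) μ :=
    fun i j => memL2_mul_int (hv2 i) (hv2 j)
  have hterm : ∀ (i j : Fin p),
      Integrable (fun ω => (xnew ω i * xnew ω j) * (v ω i * v ω j)) μ :=
    fun i j => (indxv i j i j).integrable_mul (hxx i j) (hvv i j)
  have ha_int : Integrable (fun ω => xnew ω ⬝ᵥ v ω) μ := by
    simp only [dotProduct]
    exact integrable_finset_sum _ (fun i _ => memL2_mul_int (hx2 i) (hv2 i))
  have hS_int : Integrable
      (fun ω => ∑ i, ∑ j, (xnew ω i * xnew ω j) * (v ω i * v ω j)) μ :=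
    integrable_finset_sum _ (fun i _ => integrable_finset_sum _ (fun j _ => hterm i j))
  have hac_int : Integrable (fun ω => (xnew ω ⬝ᵥ v ω) * enew ω) μ :=
    indae.integrable_mul ha_int (he2.integrable one_le_two)
  have hc2_int : Integrable (fun ω => enew ω ^ 2) μ := by
    have := memL2_mul_int he2 he2
    simpa [sq] using this
  -- pointwise decomposition
  have hpt : ∀ ω, ((xnew ω) ⬝ᵥ v ω - enew ω) ^ 2
      = ((∑ i, ∑ j, (xnew ω i * xnew ω j) * (v ω i * v ω j))
          - 2 * ((xnew ω ⬝ᵥ v ω) * enew ω)) + enew ω ^ 2 := by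
    intro ω
    have hsq : (xnew ω ⬝ᵥ v ω) ^ 2
        = ∑ i, ∑ j, (xnew ω i * xnew ω j) * (v ω i * v ω j) := by
      simp only [dotProduct, sq, Finset.sum_mul_sum]
      exact Finset.sum_congr rfl fun i _ => Finset.sum_congr rfl fun j _ => by ring
    rw [sub_sq, hsq]
    ring
  have h2ac_int : Integrable (fun ω => 2 * ((xnew ω ⬝ᵥ v ω) * enew ω)) μ :=
    hac_int.const_mul 2
  have hsub_int : Integrable (fun ω =>
      (∑ i, ∑ j, (xnew ω i * xnew ω j) * (v ω i * v ω j))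
        - 2 * ((xnew ω ⬝ᵥ v ω) * enew ω)) μ := hS_int.sub h2ac_int
  rw [integral_congr_ae (Filter.Eventually.of_forall hpt),
    integral_add hsub_int hc2_int,
    integral_sub hS_int h2ac_int, integral_const_mul,
    indae.integral_fun_mul_eq_mul_integral ha_int.aestronglyMeasurable (he2.aestronglyMeasurable),
    hemean, mul_zero, mul_zero, sub_zero, hevar]
  have hS : ∫ ω, ∑ i, ∑ j, (xnew ω i * xnew ω j) * (v ω i * v ω j) ∂μ
      = ∑ i, ∑ j, Sg i j * ((C * Om * Cᵀ) i j / p + σ ^ 2 * (D * Dᵀ) i j) := by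
    rw [integral_finset_sum _ (fun i _ => integrable_finset_sum _ (fun j _ => hterm i j))]
    refine Finset.sum_congr rfl fun i _ => ?_
    rw [integral_finset_sum _ (fun j _ => hterm i j)]
    refine Finset.sum_congr rfl fun j _ => ?_
    rw [(indxv i j i j).integral_fun_mul_eq_mul_integral (hxx i j).aestronglyMeasurable
      (hvv i j).aestronglyMeasurable, hxcov i j, hvcov i j]
  rw [hS]
  have htr : ∀ (H : Matrix (Fin p) (Fin p) ℝ),
      Matrix.trace (Sg * Hᵀ) = ∑ i, ∑ j, Sg i j * H i j := by
    intro H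
    simp [Matrix.trace, Matrix.diag, Matrix.mul_apply]
  rw [htr, htr]
  simp only [mul_add, Finset.sum_add_distrib]
  congr 1
  congr 1
  · rw [Finset.sum_div]
    refine Finset.sum_congr rfl fun i _ => ?_
    rw [Finset.sum_div]
    exact Finset.sum_congr rfl fun j _ => by ring
  · rw [Finset.mul_sum]
    refine Finset.sum_congr rfl fun i _ => ?_
    rw [Finset.mul_sum]
    exact Finset.sum_congr rfl fun j _ => by ring

/-- in the random-effects single-task model, for an arbitrary symmetric positive
definite weight matrix `A`, the predictive risk of the generalized ridge estimator
`β̂ = (XᵀX + nλA⁻¹)⁻¹Xᵀy` (with `y = Xβ̄ + ε`, `y_new = x_newᵀβ̄ + ε_new`) equals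
`σ² + (λ²/p)·tr(Ω A⁻¹ N⁻¹ Σ N⁻¹ A⁻¹) − (λσ²/n)·tr(N⁻¹ Σ N⁻¹ A⁻¹) + (σ²/n)·tr(Σ N⁻¹)`
where `N = Σ̂ + λA⁻¹`, `Σ̂ = (1/n)XᵀX`. -/
theorem stmt_3
    {W : Type*} [MeasurableSpace W] (μ : Measure W) [IsProbabilityMeasure μ]
    (n p : ℕ) (hn : 0 < n) (hp : 0 < p)
    (X : Matrix (Fin n) (Fin p) ℝ)
    (Sg Om A : Matrix (Fin p) (Fin p) ℝ) (hSg : Sg.PosDef) (hOm : Om.PosDef) (hA : A.PosDef)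
    (σ : ℝ) (hσ : 0 ≤ σ) (lam : ℝ) (hlam : 0 < lam)
    (B : W → Fin p → ℝ) (E : W → Fin n → ℝ) (xnew : W → Fin p → ℝ) (enew : W → ℝ)
    (hB : Measurable B) (hE : Measurable E) (hx : Measurable xnew) (he : Measurable enew)
    (hB2 : ∀ i, MemLp (fun ω => B ω i) 2 μ)
    (hE2 : ∀ i, MemLp (fun ω => E ω i) 2 μ)
    (hx2 : ∀ i, MemLp (fun ω => xnew ω i) 2 μ)
    (he2 : MemLp enew 2 μ)
    (hIndep : iIndepFun (m := quadFamMeas n p) (quadFun B E xnew enew) μ)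
    (hBmean : ∀ i, ∫ ω, B ω i ∂μ = 0)
    (hBcov : ∀ i j, ∫ ω, B ω i * B ω j ∂μ = Om i j / p)
    (hEmean : ∀ i, ∫ ω, E ω i ∂μ = 0)
    (hEcov : ∀ i j, ∫ ω, E ω i * E ω j ∂μ = σ ^ 2 * (1 : Matrix (Fin n) (Fin n) ℝ) i j)
    (hxcov : ∀ i j, ∫ ω, xnew ω i * xnew ω j ∂μ = Sg i j)
    (hemean : ∫ ω, enew ω ∂μ = 0)
    (hevar : ∫ ω, (enew ω) ^ 2 ∂μ = σ ^ 2) :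
    ∫ ω, ((xnew ω) ⬝ᵥ ((Xᵀ * X + ((n : ℝ) * lam) • A⁻¹)⁻¹.mulVec
          (Xᵀ.mulVec (X.mulVec (B ω) + E ω)))
        - ((xnew ω) ⬝ᵥ (B ω) + enew ω)) ^ 2 ∂μ =
      σ ^ 2
        + (lam ^ 2 / p) * Matrix.trace (Om * A⁻¹ * ((n : ℝ)⁻¹ • (Xᵀ * X) + lam • A⁻¹)⁻¹ * Sg *
            ((n : ℝ)⁻¹ • (Xᵀ * X) + lam • A⁻¹)⁻¹ * A⁻¹)
        - (lam * σ ^ 2 / n) * Matrix.trace (((n : ℝ)⁻¹ • (Xᵀ * X) + lam • A⁻¹)⁻¹ * Sg *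
            ((n : ℝ)⁻¹ • (Xᵀ * X) + lam • A⁻¹)⁻¹ * A⁻¹)
        + (σ ^ 2 / n) * Matrix.trace (Sg * ((n : ℝ)⁻¹ • (Xᵀ * X) + lam • A⁻¹)⁻¹) := by
  classical
  have hn0 : (n : ℝ) ≠ 0 := Nat.cast_ne_zero.mpr hn.ne'
  set Ai : Matrix (Fin p) (Fin p) ℝ := A⁻¹ with hAidef
  set N : Matrix (Fin p) (Fin p) ℝ := (n : ℝ)⁻¹ • (Xᵀ * X) + lam • Ai with hNdef
  -- symmetry facts
  have hAsymm : Aᵀ = A := by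
    have := hA.isHermitian
    rwa [Matrix.IsHermitian, Matrix.conjTranspose_eq_transpose_of_trivial] at this
  have hOmsymm : Omᵀ = Om := by
    have := hOm.isHermitian
    rwa [Matrix.IsHermitian, Matrix.conjTranspose_eq_transpose_of_trivial] at this
  have hAisymm : Aiᵀ = Ai := by rw [hAidef, Matrix.transpose_nonsing_inv, hAsymm]
  have hXsymm : (Xᵀ * X)ᵀ = Xᵀ * X := by rw [Matrix.transpose_mul, Matrix.transpose_transpose]
  have hNsymm : Nᵀ = N := by
    rw [hNdef, Matrix.transpose_add, Matrix.transpose_smul, Matrix.transpose_smul, hXsymm,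
      hAisymm]
  -- positivity facts
  have hAipd : Ai.PosDef := hA.inv
  have hXps : (Xᵀ * X).PosSemidef := by
    have := Matrix.posSemidef_conjTranspose_mul_self X
    rwa [Matrix.conjTranspose_eq_transpose_of_trivial] at this
  have hXps2 : ((n : ℝ)⁻¹ • (Xᵀ * X)).PosSemidef := by
    constructor
    · show ((n : ℝ)⁻¹ • (Xᵀ * X))ᴴ = (n : ℝ)⁻¹ • (Xᵀ * X)
      rw [Matrix.conjTranspose_smul, star_trivial, hXps.1.eq]
    · intro x
      exact (hXps.smul (a := (n : ℝ)⁻¹) (by positivity)).2 x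
  have hlAipd : (lam • Ai).PosDef := by
    constructor
    · show (lam • Ai)ᴴ = lam • Ai
      rw [Matrix.conjTranspose_smul, star_trivial, hAipd.1.eq]
    · intro x hx
      exact (hAipd.smul hlam).2 hx
  have hNpd : N.PosDef := Matrix.PosDef.posSemidef_add hXps2 hlAipd
  have hNdet : IsUnit N.det := hNpd.det_pos.ne'.isUnit
  have hNiN : N⁻¹ * N = 1 := Matrix.nonsing_inv_mul N hNdet
  have hNNi : N * N⁻¹ = 1 := Matrix.mul_nonsing_inv N hNdet
  have hNisymm : N⁻¹ᵀ = N⁻¹ := by rw [Matrix.transpose_nonsing_inv, hNsymm]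
  -- inverse identification
  have hM : (Xᵀ * X + ((n : ℝ) * lam) • Ai)⁻¹ = (n : ℝ)⁻¹ • N⁻¹ := by
    have h1 : Xᵀ * X + ((n : ℝ) * lam) • Ai = (n : ℝ) • N := by
      rw [hNdef, smul_add, smul_smul, smul_smul, mul_inv_cancel₀ hn0, one_smul]
    rw [h1]
    apply Matrix.inv_eq_right_inv
    rw [Matrix.smul_mul, Matrix.mul_smul, smul_smul, mul_inv_cancel₀ hn0, one_smul, hNNi]
  have h2 : (n : ℝ)⁻¹ • (Xᵀ * X) = N - lam • Ai := by rw [hNdef, add_sub_cancel_right]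
  -- the coefficient matrices
  set Cmat : Matrix (Fin p) (Fin p) ℝ := ((n : ℝ)⁻¹ • N⁻¹) * Xᵀ * X - 1 with hCdef
  set Dmat : Matrix (Fin p) (Fin n) ℝ := ((n : ℝ)⁻¹ • N⁻¹) * Xᵀ with hDdef
  have hMXX : ((n : ℝ)⁻¹ • N⁻¹) * Xᵀ * X = 1 - lam • (N⁻¹ * Ai) := by
    have e : ((n : ℝ)⁻¹ • N⁻¹) * Xᵀ * X = N⁻¹ * ((n : ℝ)⁻¹ • (Xᵀ * X)) := by
      simp only [Matrix.smul_mul, Matrix.mul_smul, Matrix.mul_assoc]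
    rw [e, h2, Matrix.mul_sub, hNiN, Matrix.mul_smul]
  have hCm : Cmat = (-lam) • (N⁻¹ * Ai) := by
    rw [hCdef, hMXX, sub_sub_cancel_left, neg_smul]
  -- rewrite the integrand
  have hglue : ∀ ω, ((xnew ω) ⬝ᵥ ((Xᵀ * X + ((n : ℝ) * lam) • Ai)⁻¹.mulVec
          (Xᵀ.mulVec (X.mulVec (B ω) + E ω)))
        - ((xnew ω) ⬝ᵥ (B ω) + enew ω)) ^ 2
      = ((xnew ω) ⬝ᵥ (Cmat.mulVec (B ω) + Dmat.mulVec (E ω)) - enew ω) ^ 2 := by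
    intro ω
    rw [hM]
    simp only [Matrix.mulVec_add, Matrix.mulVec_mulVec, hCdef, hDdef, Matrix.sub_mulVec,
      Matrix.one_mulVec, dotProduct_add, dotProduct_sub, Matrix.mul_assoc]
    ring
  rw [integral_congr_ae (Filter.Eventually.of_forall hglue),
    key_expect μ n p Sg Om σ Cmat Dmat B E xnew enew hB hE hx he hB2 hE2 hx2 he2 hIndep
      hBmean hBcov hEcov hxcov hemean hevar]
  -- matrix algebra
  have hCOC : Cmat * Om * Cmatᵀ = (lam ^ 2) • (N⁻¹ * Ai * Om * Ai * N⁻¹) := by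
    rw [hCm, Matrix.transpose_smul, Matrix.transpose_mul, hNisymm, hAisymm]
    simp only [Matrix.smul_mul, Matrix.mul_smul, smul_smul, neg_mul_neg, Matrix.mul_assoc]
    rw [← sq]
  have hG : (N⁻¹ * Ai * Om * Ai * N⁻¹)ᵀ = N⁻¹ * Ai * Om * Ai * N⁻¹ := by
    simp only [Matrix.transpose_mul, hNisymm, hAisymm, hOmsymm]
    simp only [Matrix.mul_assoc]
  have hterm1 : Matrix.trace (Sg * (Cmat * Om * Cmatᵀ)ᵀ) / p
      = lam ^ 2 / p * Matrix.trace (Om * Ai * N⁻¹ * Sg * N⁻¹ * Ai) := by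
    rw [hCOC, Matrix.transpose_smul, hG, Matrix.mul_smul, Matrix.trace_smul, smul_eq_mul]
    have e : Sg * (N⁻¹ * Ai * Om * Ai * N⁻¹) = (Sg * (N⁻¹ * Ai)) * (Om * (Ai * N⁻¹)) := by
      simp only [Matrix.mul_assoc]
    rw [e, Matrix.trace_mul_comm]
    have e2 : (Om * (Ai * N⁻¹)) * (Sg * (N⁻¹ * Ai)) = Om * Ai * N⁻¹ * Sg * N⁻¹ * Ai := by
      simp only [Matrix.mul_assoc]
    rw [e2]
    ring
  have hDDT : Dmat * Dmatᵀ = (n : ℝ)⁻¹ • (N⁻¹ - lam • (N⁻¹ * (Ai * N⁻¹))) := by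
    have hDT : Dmatᵀ = X * ((n : ℝ)⁻¹ • N⁻¹) := by
      rw [hDdef, Matrix.transpose_mul, Matrix.transpose_transpose, Matrix.transpose_smul,
        hNisymm]
    rw [hDT, hDdef]
    have e : ((n : ℝ)⁻¹ • N⁻¹) * Xᵀ * (X * ((n : ℝ)⁻¹ • N⁻¹))
        = (n : ℝ)⁻¹ • (N⁻¹ * (((n : ℝ)⁻¹ • (Xᵀ * X)) * N⁻¹)) := by
      simp only [Matrix.smul_mul, Matrix.mul_smul, Matrix.mul_assoc]
    rw [e, h2, Matrix.sub_mul, hNNi, Matrix.smul_mul, Matrix.mul_sub, Matrix.mul_one,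
      Matrix.mul_smul]
  have hterm2 : σ ^ 2 * Matrix.trace (Sg * (Dmat * Dmatᵀ)ᵀ)
      = σ ^ 2 / n * Matrix.trace (Sg * N⁻¹)
        - lam * σ ^ 2 / n * Matrix.trace (N⁻¹ * Sg * N⁻¹ * Ai) := by
    have hsym : (Dmat * Dmatᵀ)ᵀ = Dmat * Dmatᵀ := by
      rw [Matrix.transpose_mul, Matrix.transpose_transpose]
    rw [hsym, hDDT, Matrix.mul_smul, Matrix.trace_smul, smul_eq_mul, Matrix.mul_sub,
      Matrix.trace_sub, Matrix.mul_smul, Matrix.trace_smul, smul_eq_mul]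
    have e : Sg * (N⁻¹ * (Ai * N⁻¹)) = (Sg * (N⁻¹ * Ai)) * N⁻¹ := by
      simp only [Matrix.mul_assoc]
    have e3 : Matrix.trace ((Sg * (N⁻¹ * Ai)) * N⁻¹) = Matrix.trace (N⁻¹ * Sg * N⁻¹ * Ai) := by
      rw [Matrix.trace_mul_comm]
      congr 1
      simp only [Matrix.mul_assoc]
    rw [e, e3]
    ring
  rw [hterm1, hterm2]
  have eOm : Om * Ai * N⁻¹ * Sg * N⁻¹ * Ai = Om * Ai * N⁻¹ * Sg * N⁻¹ * Ai := rfl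
  ring
end

section
/- Let Σ̂ be a real symmetric positive semidefinite p×p matrix, let Ω and Υ be real symmetric positive definite p×p matrices with positive semidefinite square roots Ω^{1/2} and Υ^{1/2}, and let λ > 0. Then ‖(Σ̂ + λΩ⁻¹)⁻¹ − (Σ̂ + λΥ⁻¹)⁻¹‖ ≤ (1/λ)·‖Ω^{1/2}‖²·‖Υ^{1/2}‖²·‖Ω⁻¹ − Υ⁻¹‖, where ‖·‖ denotes the ℓ²-operator norm. -/
open Matrix
open scoped Matrix.Norms.L2Operator

/-- The ℓ²-operator norm (spectral norm) of a real matrix, i.e. the operator norm of the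
induced linear map between Euclidean spaces. -/
noncomputable def opNorm {m n : ℕ} (A : Matrix (Fin m) (Fin n) ℝ) : ℝ :=
  ‖LinearMap.toContinuousLinearMap (Matrix.toEuclideanLin A)‖

lemma opNorm_eq {m n : ℕ} (A : Matrix (Fin m) (Fin n) ℝ) : opNorm A = ‖A‖ := rfl

lemma smul_posDef {p : ℕ} {M : Matrix (Fin p) (Fin p) ℝ} (hM : M.PosDef) {c : ℝ}
    (hc : 0 < c) : (c • M).PosDef := by
  have h1 : (c • M).IsHermitian := by
    rw [Matrix.IsHermitian, conjTranspose_smul, star_trivial, hM.1.eq]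
  refine Matrix.PosDef.of_dotProduct_mulVec_pos h1 (fun x hx => ?_)
  rw [smul_mulVec, dotProduct_smul]
  exact mul_pos hc (hM.dotProduct_mulVec_pos hx)

lemma key_inv_norm (p : ℕ) (P : Matrix (Fin p) (Fin p) ℝ) (hP : P.PosSemidef)
    (lam : ℝ) (hlam : 0 < lam) :
    ‖(P + lam • (1 : Matrix (Fin p) (Fin p) ℝ))⁻¹‖ ≤ 1 / lam := by
  set M := P + lam • (1 : Matrix (Fin p) (Fin p) ℝ) with hMdef
  have hM : M.PosDef := Matrix.PosDef.posSemidef_add hP (smul_posDef Matrix.PosDef.one hlam)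
  have hdet : IsUnit M.det := hM.isUnit.map (detMonoidHom (n := Fin p) (R := ℝ))
  have hmul : M * M⁻¹ = 1 := mul_nonsing_inv _ hdet
  rw [cstar_norm_def]
  refine ContinuousLinearMap.opNorm_le_bound _ (by positivity) (fun x => ?_)
  set y : EuclideanSpace ℝ (Fin p) := toEuclideanCLM (𝕜 := ℝ) M⁻¹ x with hy
  have hxy : toEuclideanCLM (𝕜 := ℝ) M y = x := by
    rw [hy, ← ContinuousLinearMap.comp_apply, ← ContinuousLinearMap.mul_def,
      ← _root_.map_mul (toEuclideanCLM (𝕜 := ℝ)) M M⁻¹, hmul, _root_.map_one,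
      ContinuousLinearMap.one_apply]
  have hinner : (inner ℝ y (toEuclideanCLM (𝕜 := ℝ) M y) : ℝ) = (star (y : Fin p → ℝ)) ⬝ᵥ (M *ᵥ y) := by
    simp [PiLp.inner_apply, dotProduct, mulVec]
    exact Finset.sum_congr rfl fun _ _ => mul_comm _ _
  have h1 : lam * ‖y‖ ^ 2 ≤ inner ℝ y x := by
    rw [← hxy, hinner]
    have heq : (star (y : Fin p → ℝ)) ⬝ᵥ (M *ᵥ y) =
        (star (y : Fin p → ℝ)) ⬝ᵥ (P *ᵥ y) + lam * ((star (y : Fin p → ℝ)) ⬝ᵥ (y : Fin p → ℝ)) := by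
      rw [hMdef, add_mulVec, dotProduct_add, smul_mulVec, one_mulVec, dotProduct_smul,
        smul_eq_mul]
    have h2 : (star (y : Fin p → ℝ)) ⬝ᵥ (y : Fin p → ℝ) = ‖y‖ ^ 2 := by
      rw [← real_inner_self_eq_norm_sq]
      simp [PiLp.inner_apply, dotProduct]
      rw [EuclideanSpace.norm_eq, Real.sq_sqrt (by positivity)]
      simp [Real.norm_eq_abs, sq]
    rw [heq, h2]
    nlinarith [hP.dotProduct_mulVec_nonneg (y : Fin p → ℝ)]
  have h2 : (inner ℝ y x : ℝ) ≤ ‖y‖ * ‖x‖ := real_inner_le_norm y x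
  have hy0 : 0 ≤ ‖y‖ := norm_nonneg _
  have hx0 : 0 ≤ ‖x‖ := norm_nonneg _
  show ‖y‖ ≤ 1 / lam * ‖x‖
  rcases eq_or_lt_of_le hy0 with h | h
  · rw [← h]; positivity
  · rw [div_mul_eq_mul_div, le_div_iff₀ hlam]
    nlinarith

lemma inv_factor (p : ℕ) (Shat Om S : Matrix (Fin p) (Fin p) ℝ)
    (hShat : Shat.PosSemidef) (hOm : Om.PosDef) (hS : S.PosSemidef) (hSsq : S * S = Om)
    (lam : ℝ) (hlam : 0 < lam) :
    ‖(Shat + lam • Om⁻¹)⁻¹‖ ≤ ‖S‖ * (1 / lam) * ‖S‖ := by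
  have hdetS : IsUnit S.det := by
    rw [isUnit_iff_ne_zero]
    intro h
    have : Om.det = 0 := by rw [← hSsq, det_mul, h, mul_zero]
    exact hOm.det_pos.ne' this
  have hSS : S⁻¹ * S = 1 := nonsing_inv_mul _ hdetS
  have hSS' : S * S⁻¹ = 1 := mul_nonsing_inv _ hdetS
  set N : Matrix (Fin p) (Fin p) ℝ := S * Shat * S + lam • 1 with hN
  have hNpsd : (S * Shat * S).PosSemidef := by
    have := hShat.conjTranspose_mul_mul_same S
    rwa [hS.1.eq] at this
  have hA_eq : Shat + lam • Om⁻¹ = S⁻¹ * N * S⁻¹ := by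
    have hOminv : Om⁻¹ = S⁻¹ * S⁻¹ := by rw [← hSsq, Matrix.mul_inv_rev]
    rw [hN, hOminv]
    rw [Matrix.mul_add, Matrix.add_mul, Matrix.mul_smul, Matrix.smul_mul, mul_one]
    congr 1
    have : S⁻¹ * (S * Shat * S) * S⁻¹ = (S⁻¹ * S) * Shat * (S * S⁻¹) := by
      simp only [mul_assoc]
    rw [this, hSS, hSS', one_mul, mul_one]
  have hinv : (Shat + lam • Om⁻¹)⁻¹ = S * N⁻¹ * S := by
    rw [hA_eq, Matrix.mul_inv_rev, Matrix.mul_inv_rev, Matrix.nonsing_inv_nonsing_inv _ hdetS,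
      ← mul_assoc]
  rw [hinv]
  have key := key_inv_norm p (S * Shat * S) hNpsd lam hlam
  rw [← hN] at key
  have m1 := Matrix.l2_opNorm_mul (S * N⁻¹) S
  have m2 := Matrix.l2_opNorm_mul S N⁻¹
  have hs0 : (0:ℝ) ≤ ‖S‖ := norm_nonneg _
  have hn0 : (0:ℝ) ≤ ‖N⁻¹‖ := norm_nonneg _
  calc ‖S * N⁻¹ * S‖ ≤ ‖S * N⁻¹‖ * ‖S‖ := m1
    _ ≤ (‖S‖ * ‖N⁻¹‖) * ‖S‖ := mul_le_mul_of_nonneg_right m2 hs0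
    _ ≤ (‖S‖ * (1 / lam)) * ‖S‖ := by
        have := mul_le_mul_of_nonneg_left key hs0
        exact mul_le_mul_of_nonneg_right this hs0

set_option maxHeartbeats 1000000 in
/-- resolvent perturbation bound: with `Σ̂` positive semidefinite, `Ω, Υ`
positive definite with positive semidefinite square roots `S = Ω^{1/2}`, `T = Υ^{1/2}`, and
`λ > 0`:
`‖(Σ̂ + λΩ⁻¹)⁻¹ − (Σ̂ + λΥ⁻¹)⁻¹‖ ≤ (1/λ)·‖Ω^{1/2}‖²·‖Υ^{1/2}‖²·‖Ω⁻¹ − Υ⁻¹‖`. -/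
theorem stmt_13 (p : ℕ) (Shat Om Up S T : Matrix (Fin p) (Fin p) ℝ)
    (hShat : Shat.PosSemidef) (hOm : Om.PosDef) (hUp : Up.PosDef)
    (hS : S.PosSemidef) (hSsq : S * S = Om)
    (hT : T.PosSemidef) (hTsq : T * T = Up)
    (lam : ℝ) (hlam : 0 < lam) :
    opNorm ((Shat + lam • Om⁻¹)⁻¹ - (Shat + lam • Up⁻¹)⁻¹) ≤
      (1 / lam) * opNorm S ^ 2 * opNorm T ^ 2 * opNorm (Om⁻¹ - Up⁻¹) := by
  set A := Shat + lam • Om⁻¹ with hAdef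
  set B := Shat + lam • Up⁻¹ with hBdef
  have hApos : A.PosDef := Matrix.PosDef.posSemidef_add hShat (smul_posDef hOm.inv hlam)
  have hBpos : B.PosDef := Matrix.PosDef.posSemidef_add hShat (smul_posDef hUp.inv hlam)
  have hAdet : IsUnit A.det := hApos.isUnit.map (detMonoidHom (n := Fin p) (R := ℝ))
  have hBdet : IsUnit B.det := hBpos.isUnit.map (detMonoidHom (n := Fin p) (R := ℝ))
  have hA1 : A⁻¹ * A = 1 := nonsing_inv_mul _ hAdet
  have hB1 : B * B⁻¹ = 1 := mul_nonsing_inv _ hBdet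
  have hres : A⁻¹ - B⁻¹ = A⁻¹ * (B - A) * B⁻¹ := by
    rw [Matrix.mul_sub, Matrix.sub_mul, mul_assoc, hB1, mul_one, hA1, one_mul]
  have hBA : B - A = lam • (Up⁻¹ - Om⁻¹) := by
    rw [hAdef, hBdef, smul_sub]
    abel
  have hAb : ‖A⁻¹‖ ≤ ‖S‖ * (1 / lam) * ‖S‖ := inv_factor p Shat Om S hShat hOm hS hSsq lam hlam
  have hBb : ‖B⁻¹‖ ≤ ‖T‖ * (1 / lam) * ‖T‖ := inv_factor p Shat Up T hShat hUp hT hTsq lam hlam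
  simp only [opNorm_eq]
  rw [hres, hBA]
  have hX : ‖Up⁻¹ - Om⁻¹‖ = ‖Om⁻¹ - Up⁻¹‖ := norm_sub_rev _ _
  calc ‖A⁻¹ * (lam • (Up⁻¹ - Om⁻¹)) * B⁻¹‖
      ≤ ‖A⁻¹ * (lam • (Up⁻¹ - Om⁻¹))‖ * ‖B⁻¹‖ := Matrix.l2_opNorm_mul _ _
    _ ≤ (‖A⁻¹‖ * ‖lam • (Up⁻¹ - Om⁻¹)‖) * ‖B⁻¹‖ :=
        mul_le_mul_of_nonneg_right (Matrix.l2_opNorm_mul _ _) (norm_nonneg _)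
    _ = ‖A⁻¹‖ * (lam * ‖Om⁻¹ - Up⁻¹‖) * ‖B⁻¹‖ := by
        rw [norm_smul, Real.norm_of_nonneg hlam.le, hX]
    _ ≤ (‖S‖ * (1 / lam) * ‖S‖) * (lam * ‖Om⁻¹ - Up⁻¹‖) * (‖T‖ * (1 / lam) * ‖T‖) := by
        have h1 : (0:ℝ) ≤ lam * ‖Om⁻¹ - Up⁻¹‖ := by positivity
        have h2 : (0:ℝ) ≤ ‖A⁻¹‖ := norm_nonneg _
        have h3 : (0:ℝ) ≤ ‖B⁻¹‖ := norm_nonneg _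
        have h4 : (0:ℝ) ≤ ‖S‖ * (1 / lam) * ‖S‖ := by positivity
        exact mul_le_mul (mul_le_mul hAb le_rfl h1 h4) hBb h3 (mul_nonneg h4 h1)
    _ = 1 / lam * ‖S‖ ^ 2 * ‖T‖ ^ 2 * ‖Om⁻¹ - Up⁻¹‖ := by
        field_simp
end
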